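/- arXiv:1411.7656 — 5 statements merged into one kernel-verified Lean document; each statement's English description precedes it below -/
import Mathlib

section
/- Let V ⊆ H be an n-dimensional subspace. For f ∈ H let Π_{H,V} f denote the H-orthogonal projection of f onto V, and let Π_{L²,V} f denote the unique element v ∈ V minimizing ‖ι f − ι v‖_{L²(μ)} (which exists and is unique since ι is injective and V is finite-dimensional). Then Π_{H,V} f = Π_{L²,V} f for every f ∈ H if and only if V is spanned by n eigenvectors of the positive self-adjoint operator ι* ∘ ι : H → H. -/
open MeasureTheory
open scoped InnerProductSpace

/-!
By the variational characterisation of best approximations, `Π_{H,V} f` minimises `‖ι f - ι v‖`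
over `v ∈ V` iff `ι (f - Π_{H,V} f) ⟂ ι V`, i.e. iff `ι* ι (f - Π_{H,V} f) ⟂ V`. Since
`f - Π_{H,V} f` runs through all of `Vᗮ`, the condition for every `f` says that the self-adjoint
operator `ι* ι` leaves `Vᗮ`, equivalently `V = Vᗮᗮ`, invariant; and a finite-dimensional subspace
invariant under a self-adjoint operator is spanned by eigenvectors, by the spectral theorem for the
restriction.
-/

open Module Submodule

theorem Submodule.forall_norm_sub_le_iff_real_inner_eq_zero {F : Type*} [NormedAddCommGroup F]
    [InnerProductSpace ℝ F] (K : Submodule ℝ F) {u v : F} (hv : v ∈ K) :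
    (∀ w ∈ K, ‖u - v‖ ≤ ‖u - w‖) ↔ ∀ w ∈ K, ⟪u - v, w⟫_ℝ = 0 := by
  have hbdd : BddBelow (Set.range fun w : K => ‖u - w‖) :=
    ⟨0, by rintro _ ⟨w, rfl⟩; positivity⟩
  rw [← K.norm_eq_iInf_iff_real_inner_eq_zero hv]
  constructor
  · intro h
    exact le_antisymm (le_ciInf fun w => h w w.2) (ciInf_le hbdd ⟨v, hv⟩)
  · intro h w hw
    rw [h]
    exact ciInf_le hbdd ⟨w, hw⟩

section AdjointCompSelf

variable {E F : Type*} [NormedAddCommGroup E] [InnerProductSpace ℝ E] [CompleteSpace E]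
  [NormedAddCommGroup F] [InnerProductSpace ℝ F] [CompleteSpace F]

theorem ContinuousLinearMap.forall_norm_map_sub_le_iff (A : E →L[ℝ] F) {V : Submodule ℝ E}
    {f u : E} (hu : u ∈ V) :
    (∀ v ∈ V, ‖A f - A u‖ ≤ ‖A f - A v‖) ↔
      (ContinuousLinearMap.adjoint A ∘L A) (f - u) ∈ Vᗮ := by
  have key := (V.map (A : E →ₗ[ℝ] F)).forall_norm_sub_le_iff_real_inner_eq_zero
    (u := A f) (mem_map_of_mem hu)
  simp only [mem_map, forall_exists_index, and_imp, forall_apply_eq_imp_iff₂,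
    ContinuousLinearMap.coe_coe] at key
  rw [key, mem_orthogonal']
  simp only [ContinuousLinearMap.comp_apply, ContinuousLinearMap.adjoint_inner_left]
  simp only [map_sub]

theorem ContinuousLinearMap.forall_norm_map_sub_orthogonalProjection_le_iff (A : E →L[ℝ] F)
    (V : Submodule ℝ E) [V.HasOrthogonalProjection] :
    (∀ f : E, ∀ v ∈ V, ‖A f - A (V.orthogonalProjectionOnto f : E)‖ ≤ ‖A f - A v‖) ↔
      Vᗮ ∈ Module.End.invtSubmodule (ContinuousLinearMap.adjoint A ∘L A : Module.End ℝ E) := by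
  simp only [A.forall_norm_map_sub_le_iff (V.orthogonalProjectionOnto _).2]
  constructor
  · intro h g hg
    simpa [orthogonalProjectionOnto_apply_of_mem_orthogonal hg] using h g
  · intro h f
    exact h (sub_starProjection_mem_orthogonal f)

end AdjointCompSelf

section Symmetric

variable {E : Type*} [NormedAddCommGroup E] [InnerProductSpace ℝ E] {T : Module.End ℝ E}

theorem LinearMap.IsSymmetric.orthogonal_mem_invtSubmodule_iff (hT : T.IsSymmetric)
    {V : Submodule ℝ E} [V.HasOrthogonalProjection] :
    Vᗮ ∈ T.invtSubmodule ↔ V ∈ T.invtSubmodule := by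
  refine ⟨fun h => ?_, hT.orthogonalComplement_mem_invtSubmodule⟩
  simpa only [orthogonal_orthogonal] using hT.orthogonalComplement_mem_invtSubmodule h

theorem Module.End.span_mem_invtSubmodule_of_eigenvectors {R M ι : Type*} [CommRing R]
    [AddCommGroup M] [Module R M] {T : Module.End R M} {w : ι → M}
    (hw : ∀ i, ∃ c : R, T (w i) = c • w i) :
    span R (Set.range w) ∈ T.invtSubmodule := by
  rw [Module.End.mem_invtSubmodule, span_le]
  rintro _ ⟨i, rfl⟩
  obtain ⟨c, hc⟩ := hw i
  simpa [hc] using smul_mem (span R (Set.range w)) c (subset_span (Set.mem_range_self i))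

theorem LinearMap.IsSymmetric.exists_eigenvectors_span_eq_of_mem_invtSubmodule
    (hT : T.IsSymmetric) {V : Submodule ℝ E} [FiniteDimensional ℝ V] {n : ℕ}
    (hn : finrank ℝ V = n) (hV : V ∈ T.invtSubmodule) :
    ∃ w : Fin n → E, (∀ i, w i ≠ 0 ∧ ∃ c : ℝ, T (w i) = c • w i) ∧
      span ℝ (Set.range w) = V := by
  have hS := hT.restrict_invariant hV
  set b := hS.eigenvectorBasis hn
  refine ⟨fun i => (b i : E), fun i => ⟨?_, hS.eigenvalues hn i, ?_⟩, ?_⟩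
  · simpa using b.orthonormal.ne_zero i
  · exact congrArg Subtype.val (hS.apply_eigenvectorBasis hn i)
  · calc span ℝ (Set.range fun i => (b i : E)) = (span ℝ (Set.range b)).map V.subtype := by
          rw [map_span, ← Set.range_comp]; rfl
      _ = V := by rw [← b.coe_toBasis, b.toBasis.span_eq, Submodule.map_top, range_subtype]

theorem LinearMap.IsSymmetric.mem_invtSubmodule_iff_exists_eigenvectors (hT : T.IsSymmetric)
    {V : Submodule ℝ E} [FiniteDimensional ℝ V] {n : ℕ} (hn : finrank ℝ V = n) :
    V ∈ T.invtSubmodule ↔ ∃ w : Fin n → E, (∀ i, w i ≠ 0 ∧ ∃ c : ℝ, T (w i) = c • w i) ∧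
      span ℝ (Set.range w) = V := by
  refine ⟨hT.exists_eigenvectors_span_eq_of_mem_invtSubmodule hn, ?_⟩
  rintro ⟨w, hw, rfl⟩
  exact Module.End.span_mem_invtSubmodule_of_eigenvectors fun i => (hw i).2

end Symmetric

theorem stmt2_general {H : Type*} [NormedAddCommGroup H] [InnerProductSpace ℝ H] [CompleteSpace H]
    {Ω : Type*} [MeasurableSpace Ω] (μ : Measure Ω)
    (ι : H →L[ℝ] Lp ℝ 2 μ)
    (n : ℕ) (V : Submodule ℝ H) [FiniteDimensional ℝ V]
    (hV : Module.finrank ℝ V = n) :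
    (∀ f : H, ∀ v ∈ V,
        ‖ι f - ι (V.orthogonalProjection f : H)‖ ≤ ‖ι f - ι v‖) ↔
      ∃ w : Fin n → H,
        (∀ i, w i ≠ 0 ∧ ∃ c : ℝ, ((ContinuousLinearMap.adjoint ι) ∘L ι) (w i) = c • w i) ∧
        Submodule.span ℝ (Set.range w) = V := by
  have hT : LinearMap.IsSymmetric (ContinuousLinearMap.adjoint ι ∘L ι : Module.End ℝ H) :=
    (ContinuousLinearMap.isPositive_adjoint_comp_self ι).isSymmetric
  rw [ι.forall_norm_map_sub_orthogonalProjection_le_iff, hT.orthogonal_mem_invtSubmodule_iff,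
    hT.mem_invtSubmodule_iff_exists_eigenvectors hV]
  rfl

/-- For an `n`-dimensional subspace `V ⊆ H`, the `H`-orthogonal projection
`Π_{H,V}` coincides with the `L²(μ)`-best-approximation projection `Π_{L²,V}` (the unique
minimizer of `‖ι f − ι v‖` over `v ∈ V`) for every `f ∈ H` if and only if `V` is spanned by
`n` eigenvectors of the positive self-adjoint operator `ι* ∘ ι : H → H`. -/
theorem stmt2 {H : Type*} [NormedAddCommGroup H] [InnerProductSpace ℝ H] [CompleteSpace H]
    {Ω : Type*} [MeasurableSpace Ω] (μ : Measure Ω) (k : Ω → H)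
    (ι : H →L[ℝ] Lp ℝ 2 μ)
    (hι : ∀ f : H, (ι f : Ω → ℝ) =ᵐ[μ] fun x => ⟪f, k x⟫_ℝ)
    (hinj : Function.Injective ι)
    (n : ℕ) (V : Submodule ℝ H) [FiniteDimensional ℝ V]
    (hV : Module.finrank ℝ V = n) :
    (∀ f : H, ∀ v ∈ V,
        ‖ι f - ι (V.orthogonalProjection f : H)‖ ≤ ‖ι f - ι v‖) ↔
      ∃ w : Fin n → H,
        (∀ i, w i ≠ 0 ∧ ∃ c : ℝ, ((ContinuousLinearMap.adjoint ι) ∘L ι) (w i) = c • w i) ∧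
        Submodule.span ℝ (Set.range w) = V :=
  stmt2_general μ ι n V hV
end

section
/- Assume every point evaluation f ↦ f(x) (x ∈ Ω) is a bounded linear functional on H. Let (v_k)_{k∈ℕ} be a Hilbert orthonormal basis of H, let V_n := span(v_1,…,v_n), and let Π_{V_n} denote the H-orthogonal projection onto V_n. Then for every x ∈ Ω: sup over f ∈ H with ‖f‖_H ≤ 1 of |f(x) − (Π_{V_n} f)(x)| equals (Σ_{k>n} v_k(x)²)^{1/2}. -/
open scoped InnerProductSpace

/-!
By the Riesz representation theorem, evaluation at `x` is `f ↦ ⟪g, f⟫` for some `g ∈ H`. The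
projection onto `V_n` is self-adjoint, so the error `f(x) - (Π_{V_n} f)(x)` equals `⟪f, h⟫` with
`h = g - Π_{V_n} g`, and its supremum over the unit ball is `‖h‖`. Finally Parseval gives
`‖h‖² = Σ_{k ≥ n} ⟪g, v_k⟫² = Σ_{k ≥ n} v_k(x)²`.
-/

theorem exists_inner_eq_of_norm_le {𝕜 E : Type*} [RCLike 𝕜] [NormedAddCommGroup E]
    [InnerProductSpace 𝕜 E] [CompleteSpace E] (L : E →ₗ[𝕜] 𝕜)
    (hL : ∃ C, ∀ f, ‖L f‖ ≤ C * ‖f‖) : ∃ g : E, ∀ f, ⟪g, f⟫_𝕜 = L f :=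
  ⟨(InnerProductSpace.toDual 𝕜 E).symm (L.mkContinuousOfExistsBound hL), fun f => by
    rw [InnerProductSpace.toDual_symm_apply, LinearMap.mkContinuousOfExistsBound_apply]⟩

section Real

variable {H : Type*} [NormedAddCommGroup H] [InnerProductSpace ℝ H]

theorem isGreatest_abs_inner_of_norm_le_one (h : H) :
    IsGreatest {c : ℝ | ∃ f : H, ‖f‖ ≤ 1 ∧ c = |⟪f, h⟫_ℝ|} ‖h‖ := by
  constructor
  · rcases eq_or_ne h 0 with rfl | hh
    · exact ⟨0, by simp, by simp⟩
    · have hh' : ‖h‖ ≠ 0 := norm_ne_zero_iff.2 hh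
      refine ⟨‖h‖⁻¹ • h, by simp [norm_smul, hh'], ?_⟩
      rw [real_inner_smul_left, real_inner_self_eq_norm_sq, abs_of_nonneg (by positivity)]
      field_simp
  · rintro c ⟨f, hf, rfl⟩
    calc |⟪f, h⟫_ℝ| ≤ ‖f‖ * ‖h‖ := abs_real_inner_le_norm f h
      _ ≤ ‖h‖ := mul_le_of_le_one_left (norm_nonneg h) hf

theorem inner_sum_inner_smul_comm {ι : Type*} (v : ι → H) (s : Finset ι) (f g : H) :
    ⟪g, ∑ k ∈ s, ⟪f, v k⟫_ℝ • v k⟫_ℝ = ⟪f, ∑ k ∈ s, ⟪g, v k⟫_ℝ • v k⟫_ℝ := by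
  simp only [inner_sum, real_inner_smul_right, mul_comm]

theorem Orthonormal.inner_sub_sum_inner_smul {ι : Type*} [DecidableEq ι] {v : ι → H}
    (hv : Orthonormal ℝ v) (s : Finset ι) (g : H) (i : ι) :
    ⟪g - ∑ k ∈ s, ⟪g, v k⟫_ℝ • v k, v i⟫_ℝ = if i ∈ s then 0 else ⟪g, v i⟫_ℝ := by
  split_ifs with hi
  · rw [inner_sub_left, hv.inner_left_sum _ hi, conj_trivial, sub_self]
  · simp only [inner_sub_left, sum_inner, real_inner_smul_left, orthonormal_iff_ite.mp hv,
      mul_ite, mul_one, mul_zero, Finset.sum_ite_eq', hi, if_false, sub_zero]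

theorem HilbertBasis.hasSum_inner_sq {ι : Type*} (b : HilbertBasis ι ℝ H) (g : H) :
    HasSum (fun i => ⟪g, b i⟫_ℝ ^ 2) (‖g‖ ^ 2) := by
  simpa only [real_inner_comm g, ← sq, real_inner_self_eq_norm_sq]
    using b.hasSum_inner_mul_inner g g

theorem HilbertBasis.norm_sub_sum_range_sq (b : HilbertBasis ℕ ℝ H) (g : H) (n : ℕ) :
    ‖g - ∑ k ∈ Finset.range n, ⟪g, b k⟫_ℝ • b k‖ ^ 2 = ∑' k, ⟪g, b (n + k)⟫_ℝ ^ 2 := by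
  set r := g - ∑ k ∈ Finset.range n, ⟪g, b k⟫_ℝ • b k
  have hcoeff : ∀ i, ⟪r, b i⟫_ℝ = if i ∈ Finset.range n then 0 else ⟪g, b i⟫_ℝ :=
    b.orthonormal.inner_sub_sum_inner_smul (Finset.range n) g
  have hhead : ∑ k ∈ Finset.range n, ⟪r, b k⟫_ℝ ^ 2 = 0 :=
    Finset.sum_eq_zero fun k hk => by rw [hcoeff, if_pos hk, sq, mul_zero]
  have htail := (hasSum_nat_add_iff' n).2 (b.hasSum_inner_sq r)
  rw [hhead, sub_zero] at htail
  refine htail.tsum_eq.symm.trans (tsum_congr fun k => ?_)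
  rw [hcoeff, if_neg (by simp), add_comm]

end Real

theorem stmt4_general {H : Type*} [NormedAddCommGroup H] [InnerProductSpace ℝ H] [CompleteSpace H]
    {Ω : Type*}
    (ev : H →ₗ[ℝ] (Ω → ℝ))
    (hbdd : ∀ x : Ω, ∃ C : ℝ, ∀ f : H, |ev f x| ≤ C * ‖f‖)
    (v : ℕ → H) (hv : Orthonormal ℝ v)
    (hdense : (Submodule.span ℝ (Set.range v)).topologicalClosure = ⊤)
    (n : ℕ) (x : Ω) :
    sSup {c : ℝ | ∃ f : H, ‖f‖ ≤ 1 ∧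
        c = |ev f x - ev (∑ k ∈ Finset.range n, ⟪f, v k⟫_ℝ • v k) x|}
      = Real.sqrt (∑' k : ℕ, (ev (v (n + k)) x) ^ 2) := by
  obtain ⟨C, hC⟩ := hbdd x
  obtain ⟨g, hg⟩ := exists_inner_eq_of_norm_le ((LinearMap.proj x).comp ev) ⟨C, hC⟩
  replace hg : ∀ f, ⟪g, f⟫_ℝ = ev f x := hg
  have herror : ∀ f, ev f x - ev (∑ k ∈ Finset.range n, ⟪f, v k⟫_ℝ • v k) x
      = ⟪f, g - ∑ k ∈ Finset.range n, ⟪g, v k⟫_ℝ • v k⟫_ℝ := fun f => by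
    rw [← hg, ← hg, inner_sum_inner_smul_comm, inner_sub_right, real_inner_comm]
  let b : HilbertBasis ℕ ℝ H := HilbertBasis.mk hv hdense.ge
  have hb : ⇑b = v := HilbertBasis.coe_mk hv _
  simp only [herror]
  simp only [← hg]
  rw [(isGreatest_abs_inner_of_norm_le_one _).csSup_eq, ← hb, ← b.norm_sub_sum_range_sq,
    Real.sqrt_sq (norm_nonneg _)]

/-- Assume every point evaluation on `H` is bounded. Let `(v_k)` be a
Hilbert orthonormal basis of `H`, `V_n = span(v_0, …, v_{n-1})`, and `Π_{V_n}` the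
`H`-orthogonal projection onto `V_n` (given explicitly by `f ↦ Σ_{k<n} ⟪f, v_k⟫ v_k`).
Then for every `x ∈ Ω`, the supremum over the unit ball of `|f(x) − (Π_{V_n} f)(x)|`
equals `(Σ_{k ≥ n} v_k(x)²)^{1/2}`. -/
theorem stmt4 {H : Type*} [NormedAddCommGroup H] [InnerProductSpace ℝ H] [CompleteSpace H]
    {Ω : Type*}
    (ev : H →ₗ[ℝ] (Ω → ℝ)) (hev : Function.Injective ev)
    (hbdd : ∀ x : Ω, ∃ C : ℝ, ∀ f : H, |ev f x| ≤ C * ‖f‖)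
    (v : ℕ → H) (hv : Orthonormal ℝ v)
    (hdense : (Submodule.span ℝ (Set.range v)).topologicalClosure = ⊤)
    (n : ℕ) (x : Ω) :
    sSup {c : ℝ | ∃ f : H, ‖f‖ ≤ 1 ∧
        c = |ev f x - ev (∑ k ∈ Finset.range n, ⟪f, v k⟫_ℝ • v k) x|}
      = Real.sqrt (∑' k : ℕ, (ev (v (n + k)) x) ^ 2) :=
  stmt4_general ev hbdd v hv hdense n x
end

section
/- Assume Σ_j λ_j < ∞. Define p_n as the infimum, over all n-dimensional subspaces V ⊆ H, of (∫_Ω P_V(x)² dμ(x))^{1/2}. Then p_n = (Σ_{j>n} λ_j)^{1/2}; the infimum is attained by E_n := span(e_1,…,e_n), and if moreover λ_n > λ_{n+1} then E_n is the unique n-dimensional subspace attaining it. -/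
/-!
Expanding in the eigenbasis, `∫ ‖k x - P_V (k x)‖² dμ = ∑ λᵢ tᵢ` with
`tᵢ = ‖eᵢ - P_V eᵢ‖² ∈ [0, 1]`, while `∑ (1 - tᵢ) = ∑ ‖P_V eᵢ‖²` is the trace `dim V = n` of
`P_V`. Hence the deficit `∑_{j ≥ n} (1 - tⱼ)` equals `∑_{i < n} tᵢ`, and as `λⱼ ≤ λₙ` for `j ≥ n`,
`∑ λᵢ tᵢ ≥ ∑_{j ≥ n} λⱼ + ∑_{i < n} (λᵢ - λₙ) tᵢ ≥ ∑_{j ≥ n} λⱼ`.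
The span `E_n` has `tᵢ = 0` for `i < n` and `tᵢ = 1` otherwise, so it attains the bound.
If `λ_{n-1} > λₙ`, equality forces `tᵢ = 0` for `i < n`, i.e. `E_n ≤ V`, and `V = E_n` by
dimension.
-/

open MeasureTheory Finset
open scoped InnerProductSpace

theorem hasSum_swap_of_nonneg {β γ : Type*} {f : β → γ → ℝ} (hf : ∀ b c, 0 ≤ f b c)
    {u : β → ℝ} {v : γ → ℝ} {a : ℝ} (hrow : ∀ b, HasSum (f b) (u b))
    (hcol : ∀ c, HasSum (f · c) (v c)) (hu : HasSum u a) : HasSum v a := by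
  have hprod : Summable (Function.uncurry f) :=
    (summable_prod_of_nonneg fun p => hf p.1 p.2).2
      ⟨fun b => (hrow b).summable, by simpa only [(hrow _).tsum_eq] using hu.summable⟩
  have hv : Summable v := by
    simpa only [Function.uncurry, Prod.fst_swap, Prod.snd_swap, (hcol _).tsum_eq] using
      hprod.prod_symm.prod
  refine hv.hasSum_iff.2 ?_
  calc ∑' c, v c = ∑' c, ∑' b, f b c := tsum_congr fun c => (hcol c).tsum_eq.symm
    _ = ∑' b, ∑' c, f b c := hprod.tsum_comm
    _ = a := by simp only [(hrow _).tsum_eq, hu.tsum_eq]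

theorem tsum_nat_add_add_sum_le_tsum_mul {lam t : ℕ → ℝ} {n : ℕ} (hlam : Antitone lam)
    (hsum : Summable lam) (ht0 : ∀ i, 0 ≤ t i) (ht1 : ∀ i, t i ≤ 1)
    (htr : HasSum (fun i => 1 - t i) n) :
    ∑' j, lam (n + j) + ∑ i ∈ range n, (lam i - lam n) * t i ≤ ∑' i, lam i * t i := by
  have hlam0 : ∀ i, 0 ≤ lam i := hlam.le_of_tendsto hsum.tendsto_atTop_zero
  have hsummable : Summable fun i => lam i * t i :=
    hsum.of_nonneg_of_le (fun i => mul_nonneg (hlam0 i) (ht0 i))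
      fun i => mul_le_of_le_one_right (hlam0 i) (ht1 i)
  have htail : HasSum (fun j => 1 - t (j + n)) (∑ i ∈ range n, t i) := by
    have h := (hasSum_nat_add_iff' n).2 htr
    rwa [sum_sub_distrib, sum_const, card_range, nsmul_one, sub_sub_cancel] at h
  have hA := ((summable_nat_add_iff n).2 hsummable).hasSum
  have hB : HasSum (fun j => lam (j + n) * (1 - t (j + n)))
      (∑' j, lam (j + n) * (1 - t (j + n))) :=
    Summable.hasSum <| ((summable_nat_add_iff n).2 hsum).of_nonneg_of_le
      (fun j => mul_nonneg (hlam0 _) (sub_nonneg.2 (ht1 _)))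
      fun j => mul_le_of_le_one_right (hlam0 _) (sub_le_self _ (ht0 _))
  have hsplit : ∑' j, lam (n + j) =
      ∑' j, lam (j + n) * t (j + n) + ∑' j, lam (j + n) * (1 - t (j + n)) :=
    ((hA.add hB).congr_fun fun j => by rw [add_comm n]; ring).tsum_eq
  have hB_le : ∑' j, lam (j + n) * (1 - t (j + n)) ≤ lam n * ∑ i ∈ range n, t i :=
    hasSum_le (fun j => mul_le_mul_of_nonneg_right (hlam (by omega)) (sub_nonneg.2 (ht1 _)))
      hB (htail.mul_left (lam n))
  have hhead : ∑ i ∈ range n, (lam i - lam n) * t i =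
      ∑ i ∈ range n, lam i * t i - lam n * ∑ i ∈ range n, t i := by
    simp only [sub_mul, sum_sub_distrib, mul_sum]
  linarith [hsummable.sum_add_tsum_nat_add n]

theorem eq_zero_of_sum_sub_mul_nonpos {lam t : ℕ → ℝ} {n : ℕ} (hlam : Antitone lam)
    (hgap : ∀ m, m + 1 = n → lam n < lam m) (ht0 : ∀ i, 0 ≤ t i)
    (h : ∑ i ∈ range n, (lam i - lam n) * t i ≤ 0) {i : ℕ} (hi : i < n) : t i = 0 := by
  have hpos : ∀ j < n, 0 < lam j - lam n := fun j hj =>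
    sub_pos.2 ((hgap (n - 1) (by omega)).trans_le (hlam (by omega)))
  have hnonneg : ∀ j ∈ range n, 0 ≤ (lam j - lam n) * t j := fun j hj =>
    mul_nonneg (hpos j (mem_range.1 hj)).le (ht0 j)
  have hterm := (sum_eq_zero_iff_of_nonneg hnonneg).1 (h.antisymm (sum_nonneg hnonneg)) i
    (mem_range.2 hi)
  exact (mul_eq_zero.1 hterm).resolve_left (hpos i hi).ne'

theorem HilbertBasis.hasSum_sq_inner {I H : Type*} [NormedAddCommGroup H] [InnerProductSpace ℝ H]
    (b : HilbertBasis I ℝ H) (x : H) : HasSum (fun i => ⟪b i, x⟫_ℝ ^ 2) (‖x‖ ^ 2) := by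
  simpa only [real_inner_comm (b _) x, ← sq, real_inner_self_eq_norm_sq] using
    b.hasSum_inner_mul_inner x x

theorem Orthonormal.finrank_span_image_Iio {𝕜 H : Type*} [RCLike 𝕜] [NormedAddCommGroup H]
    [InnerProductSpace 𝕜 H] {e : ℕ → H} (he : Orthonormal 𝕜 e) (n : ℕ) :
    Module.finrank 𝕜 (Submodule.span 𝕜 (e '' Set.Iio n)) = n := by
  rw [← Fin.range_val, ← Set.range_comp,
    finrank_span_eq_card (he.linearIndependent.comp _ Fin.val_injective), Fintype.card_fin]

theorem Orthonormal.mem_orthogonal_span_image {𝕜 H I : Type*} [RCLike 𝕜] [NormedAddCommGroup H]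
    [InnerProductSpace 𝕜 H] {e : I → H} (he : Orthonormal 𝕜 e) {s : Set I} {i : I}
    (hi : i ∉ s) : e i ∈ (Submodule.span 𝕜 (e '' s))ᗮ := by
  have h : Submodule.span 𝕜 (e '' s) ⟂ Submodule.span 𝕜 {e i} := by
    refine Submodule.isOrtho_span.2 ?_
    rintro _ ⟨j, hj, rfl⟩ _ rfl
    exact he.2 (ne_of_mem_of_not_mem hj hi)
  exact h.symm (Submodule.mem_span_singleton_self _)

section Projection

variable {H : Type*} [NormedAddCommGroup H] [InnerProductSpace ℝ H] {V : Submodule ℝ H}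
  {p : H →ₗ[ℝ] H}

theorem Submodule.starProjection_orthogonal_eq_sub [V.HasOrthogonalProjection]
    (hp : ∀ f, p f ∈ V ∧ f - p f ∈ Vᗮ) (f : H) : Vᗮ.starProjection f = f - p f := by
  rw [starProjection_orthogonal_val, V.eq_starProjection_of_mem_orthogonal (hp f).1 (hp f).2]

theorem HilbertBasis.hasSum_norm_sq_starProjection {I : Type*} (b : HilbertBasis I ℝ H)
    (V : Submodule ℝ H) [FiniteDimensional ℝ V] :
    HasSum (fun i => ‖V.starProjection (b i)‖ ^ 2) (Module.finrank ℝ V) := by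
  let u := stdOrthonormalBasis ℝ V
  have hproj : ∀ x, ‖V.starProjection x‖ ^ 2 = ∑ m, ⟪(u m : H), x⟫_ℝ ^ 2 := fun x => by
    rw [V.starProjection_apply, Submodule.norm_coe, ← u.sum_sq_inner_right]
    simp only [Submodule.inner_orthogonalProjectionOnto_eq_of_mem_left]
  have h := hasSum_sum (s := univ) fun m _ => b.hasSum_sq_inner (u m : H)
  simp only [Submodule.norm_coe, u.orthonormal.1, one_pow, sum_const, card_univ,
    Fintype.card_fin, nsmul_eq_mul, mul_one] at h
  exact h.congr_fun fun i => by simp only [hproj, real_inner_comm (b i)]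

theorem HilbertBasis.tsum_nat_add_add_sum_le_tsum_mul_norm_sub_sq (b : HilbertBasis ℕ ℝ H)
    [FiniteDimensional ℝ V] (hp : ∀ f, p f ∈ V ∧ f - p f ∈ Vᗮ) {lam : ℕ → ℝ}
    (hlam : Antitone lam) (hsum : Summable lam) :
    ∑' j, lam (Module.finrank ℝ V + j) + ∑ i ∈ range (Module.finrank ℝ V),
        (lam i - lam (Module.finrank ℝ V)) * ‖b i - p (b i)‖ ^ 2 ≤
      ∑' i, lam i * ‖b i - p (b i)‖ ^ 2 := by
  have hpyth : ∀ i, 1 - ‖b i - p (b i)‖ ^ 2 = ‖V.starProjection (b i)‖ ^ 2 := fun i => by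
    have h := Submodule.norm_sq_eq_add_norm_sq_projection (b i) V
    rw [b.orthonormal.1 i, one_pow] at h
    rw [← V.starProjection_orthogonal_eq_sub hp]
    simp only [Submodule.starProjection_apply, Submodule.norm_coe]
    linarith
  refine tsum_nat_add_add_sum_le_tsum_mul hlam hsum (fun i => sq_nonneg _) (fun i => ?_)
    ((b.hasSum_norm_sq_starProjection V).congr_fun hpyth)
  linarith [hpyth i, sq_nonneg ‖V.starProjection (b i)‖]

theorem HilbertBasis.tsum_nat_add_le_tsum_mul_norm_sub_sq (b : HilbertBasis ℕ ℝ H)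
    [FiniteDimensional ℝ V] (hp : ∀ f, p f ∈ V ∧ f - p f ∈ Vᗮ) {lam : ℕ → ℝ}
    (hlam : Antitone lam) (hsum : Summable lam) :
    ∑' j, lam (Module.finrank ℝ V + j) ≤ ∑' i, lam i * ‖b i - p (b i)‖ ^ 2 := by
  refine (le_add_of_nonneg_right ?_).trans
    (b.tsum_nat_add_add_sum_le_tsum_mul_norm_sub_sq hp hlam hsum)
  exact sum_nonneg fun i hi => mul_nonneg (sub_nonneg.2 (hlam (mem_range.1 hi).le)) (sq_nonneg _)

theorem HilbertBasis.eq_span_image_Iio_of_tsum_mul_norm_sub_sq_le (b : HilbertBasis ℕ ℝ H)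
    [FiniteDimensional ℝ V] (hp : ∀ f, p f ∈ V ∧ f - p f ∈ Vᗮ) {lam : ℕ → ℝ}
    (hlam : Antitone lam) (hsum : Summable lam)
    (hgap : ∀ m, m + 1 = Module.finrank ℝ V → lam (Module.finrank ℝ V) < lam m)
    (hle : ∑' i, lam i * ‖b i - p (b i)‖ ^ 2 ≤ ∑' j, lam (Module.finrank ℝ V + j)) :
    V = Submodule.span ℝ (b '' Set.Iio (Module.finrank ℝ V)) := by
  have hfix : ∀ i < Module.finrank ℝ V, b i = p (b i) := fun i hi => by
    have h := eq_zero_of_sum_sub_mul_nonpos hlam hgap (fun i => sq_nonneg _)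
      (by linarith [b.tsum_nat_add_add_sum_le_tsum_mul_norm_sub_sq hp hlam hsum]) hi
    rwa [sq_eq_zero_iff, norm_eq_zero, sub_eq_zero] at h
  refine (Submodule.eq_of_le_of_finrank_eq (Submodule.span_le.2 ?_) ?_).symm
  · rintro _ ⟨i, hi, rfl⟩
    exact hfix i hi ▸ (hp (b i)).1
  · rw [b.orthonormal.finrank_span_image_Iio]

theorem Orthonormal.tsum_mul_norm_sub_sq_span_image_Iio {e : ℕ → H} (he : Orthonormal ℝ e)
    {lam : ℕ → ℝ} (hsum : Summable lam) {n : ℕ}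
    (hp : ∀ f, p f ∈ Submodule.span ℝ (e '' Set.Iio n) ∧
      f - p f ∈ (Submodule.span ℝ (e '' Set.Iio n))ᗮ) :
    ∑' i, lam i * ‖e i - p (e i)‖ ^ 2 = ∑' j, lam (n + j) := by
  have : FiniteDimensional ℝ (Submodule.span ℝ (e '' Set.Iio n)) :=
    FiniteDimensional.span_of_finite ℝ ((Set.finite_Iio n).image e)
  have hweight : ∀ i, ‖e i - p (e i)‖ ^ 2 = if i < n then 0 else 1 := fun i => by
    rw [← Submodule.starProjection_orthogonal_eq_sub hp]
    split_ifs with hi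
    · rw [Submodule.starProjection_orthogonal_apply_eq_zero
        (Submodule.subset_span (Set.mem_image_of_mem e (Set.mem_Iio.2 hi))), norm_zero,
        zero_pow two_ne_zero]
    · rw [Submodule.starProjection_eq_self_iff.2
        (he.mem_orthogonal_span_image (s := Set.Iio n) hi), he.1 i, one_pow]
  simp only [hweight]
  refine ((hasSum_nat_add_iff' n).1 ?_).tsum_eq
  simpa [add_comm n, Finset.sum_ite_of_true] using ((summable_nat_add_iff n).2 hsum).hasSum

end Projection

section Eigenbasis

variable {H F I : Type*} [NormedAddCommGroup H] [InnerProductSpace ℝ H]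
  [NormedAddCommGroup F] [InnerProductSpace ℝ F] {b : HilbertBasis I ℝ H} {ι : H →L[ℝ] F}
  [DecidableEq I] {lam : I → ℝ}

theorem nonneg_of_inner_map_eq_ite
    (heig : ∀ i j, ⟪ι (b i), ι (b j)⟫_ℝ = if i = j then lam j else 0) (j : I) : 0 ≤ lam j := by
  simpa only [heig, if_pos] using real_inner_self_nonneg (x := ι (b j))

theorem inner_map_basis_map_eq
    (heig : ∀ i j, ⟪ι (b i), ι (b j)⟫_ℝ = if i = j then lam j else 0) (i : I) (f : H) :
    ⟪ι (b i), ι f⟫_ℝ = lam i * ⟪b i, f⟫_ℝ := by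
  have h := ((b.hasSum_repr f).mapL ι).mapL (innerSL ℝ (ι (b i)))
  simp only [map_smul, innerSL_apply_apply, heig, b.repr_apply_apply, smul_eq_mul, mul_ite,
    mul_zero] at h
  rw [← h.tsum_eq, tsum_ite_eq' i (fun j => ⟪b j, f⟫_ℝ * lam j), mul_comm]

theorem hasSum_mul_sq_inner
    (heig : ∀ i j, ⟪ι (b i), ι (b j)⟫_ℝ = if i = j then lam j else 0) (f : H) :
    HasSum (fun i => lam i * ⟪b i, f⟫_ℝ ^ 2) (‖ι f‖ ^ 2) := by
  have h := ((b.hasSum_repr f).mapL ι).mapL (innerSL ℝ (ι f))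
  simp only [map_smul, innerSL_apply_apply, smul_eq_mul, real_inner_comm _ (ι f),
    inner_map_basis_map_eq heig, b.repr_apply_apply, real_inner_self_eq_norm_sq] at h
  exact h.congr_fun fun i => by ring

end Eigenbasis

theorem MeasureTheory.L2.integral_sq_eq_norm_sq {Ω : Type*} [MeasurableSpace Ω] {μ : Measure Ω}
    (g : Lp ℝ 2 μ) : ∫ x, g x ^ 2 ∂μ = ‖g‖ ^ 2 := by
  rw [← real_inner_self_eq_norm_sq, inner_def]
  simp only [RCLike.inner_apply, conj_trivial, sq]

section PowerFunction

variable {H I Ω : Type*} [NormedAddCommGroup H] [InnerProductSpace ℝ H] [CompleteSpace H]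
  [Countable I] [DecidableEq I] [MeasurableSpace Ω] {μ : Measure Ω} {k : Ω → H}
  {b : HilbertBasis I ℝ H} {ι : H →L[ℝ] Lp ℝ 2 μ} {lam : I → ℝ}

theorem integral_norm_sq_apply_eq_tsum (hι : ∀ f : H, (ι f : Ω → ℝ) =ᵐ[μ] fun x => ⟪f, k x⟫_ℝ)
    (heig : ∀ i j, ⟪ι (b i), ι (b j)⟫_ℝ = if i = j then lam j else 0) (hsum : Summable lam)
    (T : H →L[ℝ] H) :
    ∫ x, ‖T (k x)‖ ^ 2 ∂μ = ∑' i, lam i * ‖T (b i)‖ ^ 2 := by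
  set g : I → Lp ℝ 2 μ := fun j => ι (T.adjoint (b j))
  have hlam := nonneg_of_inner_map_eq_ite heig
  have hpointwise : ∀ᵐ x ∂μ, HasSum (fun j => g j x ^ 2) (‖T (k x)‖ ^ 2) := by
    filter_upwards [ae_all_iff.2 fun j => hι (T.adjoint (b j))] with x hx
    simpa only [g, hx, ContinuousLinearMap.adjoint_inner_left] using
      b.hasSum_sq_inner (T (k x))
  have hrow : ∀ i, HasSum (fun j => lam i * ⟪b i, T.adjoint (b j)⟫_ℝ ^ 2)
      (lam i * ‖T (b i)‖ ^ 2) := fun i => by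
    simpa only [ContinuousLinearMap.adjoint_inner_right, real_inner_comm (b _)] using
      (b.hasSum_sq_inner (T (b i))).mul_left (lam i)
  have hsummable : Summable fun i => lam i * ‖T (b i)‖ ^ 2 := by
    refine (hsum.mul_right (‖T‖ ^ 2)).of_nonneg_of_le
      (fun i => mul_nonneg (hlam i) (sq_nonneg _)) fun i => mul_le_mul_of_nonneg_left ?_ (hlam i)
    simpa only [b.orthonormal.1 i, mul_one] using
      pow_le_pow_left₀ (norm_nonneg _) (T.le_opNorm (b i)) 2
  have hg : HasSum (fun j => ‖g j‖ ^ 2) (∑' i, lam i * ‖T (b i)‖ ^ 2) :=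
    hasSum_swap_of_nonneg (fun i j => mul_nonneg (hlam i) (sq_nonneg _)) hrow
      (fun j => hasSum_mul_sq_inner heig _) hsummable.hasSum
  have hint := hasSum_integral_of_summable_integral_norm
    (F := fun j x => g j x ^ 2) (fun j => (Lp.memLp (g j)).integrable_sq)
    (by simpa only [norm_pow, Real.norm_eq_abs, sq_abs, L2.integral_sq_eq_norm_sq] using
      hg.summable)
  simp only [L2.integral_sq_eq_norm_sq] at hint
  rw [integral_congr_ae (hpointwise.mono fun x hx => hx.tsum_eq.symm)]
  exact hint.unique hg

theorem integral_norm_sub_sq_eq_tsum (hι : ∀ f : H, (ι f : Ω → ℝ) =ᵐ[μ] fun x => ⟪f, k x⟫_ℝ)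
    (heig : ∀ i j, ⟪ι (b i), ι (b j)⟫_ℝ = if i = j then lam j else 0) (hsum : Summable lam)
    {V : Submodule ℝ H} [V.HasOrthogonalProjection] {p : H →ₗ[ℝ] H}
    (hp : ∀ f, p f ∈ V ∧ f - p f ∈ Vᗮ) :
    ∫ x, ‖k x - p (k x)‖ ^ 2 ∂μ = ∑' i, lam i * ‖b i - p (b i)‖ ^ 2 := by
  simpa only [V.starProjection_orthogonal_eq_sub hp] using
    integral_norm_sq_apply_eq_tsum hι heig hsum Vᗮ.starProjection

end PowerFunction

theorem stmt6_general {H : Type*} [NormedAddCommGroup H] [InnerProductSpace ℝ H] [CompleteSpace H]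
    {Ω : Type*} [MeasurableSpace Ω] (μ : Measure Ω) (k : Ω → H)
    (ι : H →L[ℝ] Lp ℝ 2 μ)
    (hι : ∀ f : H, (ι f : Ω → ℝ) =ᵐ[μ] fun x => ⟪f, k x⟫_ℝ)
    (e : ℕ → H) (lam : ℕ → ℝ)
    (he : Orthonormal ℝ e)
    (hdense : (Submodule.span ℝ (Set.range e)).topologicalClosure = ⊤)
    (hmono : ∀ j, lam (j + 1) ≤ lam j)
    (heig : ∀ i j, ⟪ι (e i), ι (e j)⟫_ℝ = if i = j then lam j else 0)
    (hsum : Summable lam)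
    (n : ℕ) :
    IsLeast {c : ℝ | ∃ (V : Submodule ℝ H) (p : H →ₗ[ℝ] H),
          FiniteDimensional ℝ V ∧ Module.finrank ℝ V = n ∧
          (∀ f : H, p f ∈ V ∧ f - p f ∈ Vᗮ) ∧
          c = Real.sqrt (∫ x, ‖k x - p (k x)‖ ^ 2 ∂μ)}
        (Real.sqrt (∑' j : ℕ, lam (n + j))) ∧
      (∀ p : H →ₗ[ℝ] H,
        (∀ f : H, p f ∈ Submodule.span ℝ (e '' Set.Iio n) ∧
            f - p f ∈ (Submodule.span ℝ (e '' Set.Iio n))ᗮ) →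
        Real.sqrt (∫ x, ‖k x - p (k x)‖ ^ 2 ∂μ) = Real.sqrt (∑' j : ℕ, lam (n + j))) ∧
      ((∀ m, m + 1 = n → lam n < lam m) →
        ∀ (V : Submodule ℝ H) (p : H →ₗ[ℝ] H),
          FiniteDimensional ℝ V → Module.finrank ℝ V = n →
          (∀ f : H, p f ∈ V ∧ f - p f ∈ Vᗮ) →
          Real.sqrt (∫ x, ‖k x - p (k x)‖ ^ 2 ∂μ) = Real.sqrt (∑' j : ℕ, lam (n + j)) →
          V = Submodule.span ℝ (e '' Set.Iio n)) := by
  obtain ⟨b, rfl⟩ : ∃ b : HilbertBasis ℕ ℝ H, ⇑b = e := ⟨_, HilbertBasis.coe_mk he hdense.ge⟩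
  have hlam : Antitone lam := antitone_nat_of_succ_le hmono
  set E := Submodule.span ℝ (b '' Set.Iio n)
  have hE : FiniteDimensional ℝ E := FiniteDimensional.span_of_finite ℝ ((Set.finite_Iio n).image b)
  have hvalE : ∀ p : H →ₗ[ℝ] H, (∀ f, p f ∈ E ∧ f - p f ∈ Eᗮ) →
      ∫ x, ‖k x - p (k x)‖ ^ 2 ∂μ = ∑' j, lam (n + j) := fun p hp => by
    rw [integral_norm_sub_sq_eq_tsum hι heig hsum hp,
      b.orthonormal.tsum_mul_norm_sub_sq_span_image_Iio hsum hp]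
  have hpE : ∀ f, (E.starProjection : H →ₗ[ℝ] H) f ∈ E ∧ f - E.starProjection f ∈ Eᗮ :=
    fun f => ⟨E.starProjection_apply_mem f, E.sub_starProjection_mem_orthogonal f⟩
  refine ⟨⟨⟨E, _, hE, b.orthonormal.finrank_span_image_Iio n, hpE, by rw [hvalE _ hpE]⟩, ?_⟩,
    fun p hp => by rw [hvalE p hp], ?_⟩
  · rintro _ ⟨V, p, hV, rfl, hp, rfl⟩
    rw [integral_norm_sub_sq_eq_tsum hι heig hsum hp]
    exact Real.sqrt_le_sqrt (b.tsum_nat_add_le_tsum_mul_norm_sub_sq hp hlam hsum)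
  · rintro hgap V p hV rfl hp hsqrt
    rw [integral_norm_sub_sq_eq_tsum hι heig hsum hp] at hsqrt
    refine b.eq_span_image_Iio_of_tsum_mul_norm_sub_sq_le hp hlam hsum hgap
      ((Real.sqrt_le_sqrt_iff ?_).1 hsqrt.le)
    exact tsum_nonneg fun j => nonneg_of_inner_map_eq_ite heig _

/-- Assume `Σ_j λ_j < ∞`. With the Mercer eigenbasis `(e_j)` (zero-indexed),
`p_n := inf_{dim V = n} (∫_Ω P_V(x)² dμ)^{1/2}` (where `P_V(x) = ‖k x − P_V (k x)‖` is the
Power Function) equals `(Σ_{j>n} λ_j)^{1/2}` (here `√(Σ_j lam (n+j))`); the infimum is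
attained by `E_n := span(e_0, …, e_{n-1})`, and if `λ_n > λ_{n+1}` then `E_n` is the unique
`n`-dimensional subspace attaining it. -/
theorem stmt6 {H : Type*} [NormedAddCommGroup H] [InnerProductSpace ℝ H] [CompleteSpace H]
    {Ω : Type*} [MeasurableSpace Ω] (μ : Measure Ω) (k : Ω → H)
    (ι : H →L[ℝ] Lp ℝ 2 μ)
    (hι : ∀ f : H, (ι f : Ω → ℝ) =ᵐ[μ] fun x => ⟪f, k x⟫_ℝ)
    (hinj : Function.Injective ι)
    (e : ℕ → H) (lam : ℕ → ℝ)
    (he : Orthonormal ℝ e)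
    (hdense : (Submodule.span ℝ (Set.range e)).topologicalClosure = ⊤)
    (hpos : ∀ j, 0 < lam j) (hmono : ∀ j, lam (j + 1) ≤ lam j)
    (heig : ∀ i j, ⟪ι (e i), ι (e j)⟫_ℝ = if i = j then lam j else 0)
    (hsum : Summable lam)
    (n : ℕ) :
    IsLeast {c : ℝ | ∃ (V : Submodule ℝ H) (p : H →ₗ[ℝ] H),
          FiniteDimensional ℝ V ∧ Module.finrank ℝ V = n ∧
          (∀ f : H, p f ∈ V ∧ f - p f ∈ Vᗮ) ∧
          c = Real.sqrt (∫ x, ‖k x - p (k x)‖ ^ 2 ∂μ)}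
        (Real.sqrt (∑' j : ℕ, lam (n + j))) ∧
      (∀ p : H →ₗ[ℝ] H,
        (∀ f : H, p f ∈ Submodule.span ℝ (e '' Set.Iio n) ∧
            f - p f ∈ (Submodule.span ℝ (e '' Set.Iio n))ᗮ) →
        Real.sqrt (∫ x, ‖k x - p (k x)‖ ^ 2 ∂μ) = Real.sqrt (∑' j : ℕ, lam (n + j))) ∧
      ((∀ m, m + 1 = n → lam n < lam m) →
        ∀ (V : Submodule ℝ H) (p : H →ₗ[ℝ] H),
          FiniteDimensional ℝ V → Module.finrank ℝ V = n →
          (∀ f : H, p f ∈ V ∧ f - p f ∈ Vᗮ) →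
          Real.sqrt (∫ x, ‖k x - p (k x)‖ ^ 2 ∂μ) = Real.sqrt (∑' j : ℕ, lam (n + j)) →
          V = Submodule.span ℝ (e '' Set.Iio n)) :=
  stmt6_general μ k ι hι e lam he hdense hmono heig hsum n
end

section
/- Assume Σ_j λ_j < ∞. Then for every Hilbert orthonormal basis (w_k)_{k≥1} of H and every n ∈ ℕ: Σ_{k=1}^n ‖ι w_k‖²_{L²(μ)} ≤ Σ_{j=1}^n λ_j, Σ_{k≥1} ‖ι w_k‖²_{L²(μ)} = Σ_{j≥1} λ_j, and consequently Σ_{k>n} ‖ι w_k‖²_{L²(μ)} ≥ Σ_{j>n} λ_j, with equality when w_j = e_j for all j. -/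
open MeasureTheory Finset
open scoped InnerProductSpace

/-! Expanding in the basis `e` gives `‖ι f‖² = ∑ⱼ λⱼ ⟪eⱼ, f⟫²`. For orthonormal `w₀, …, wₙ₋₁` the
weights `cⱼ = ∑_{k<n} ⟪eⱼ, w_k⟫²` lie in `[0, 1]` (Bessel) and add up to `n` (Parseval), so
`∑_{k<n} ‖ι w_k‖² = ∑ⱼ λⱼ cⱼ ≤ ∑_{j<n} λⱼ` since `λ` is nonincreasing. When `w` is a Hilbert basis,
summing the nonnegative double series `∑_{j,k} λⱼ ⟪eⱼ, w_k⟫²` in both orders shows that the total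
sums agree; the tail inequality is the difference of the two statements. -/

theorem tsum_nat_add_le_of_sum_range_le {f g : ℕ → ℝ} {a : ℝ} (hf : HasSum f a)
    (hg : HasSum g a) (n : ℕ) (h : ∑ i ∈ range n, f i ≤ ∑ i ∈ range n, g i) :
    ∑' i, g (n + i) ≤ ∑' i, f (n + i) := by
  simp_rw [add_comm n]
  rw [((hasSum_nat_add_iff' n).2 hf).tsum_eq, ((hasSum_nat_add_iff' n).2 hg).tsum_eq]
  linarith

/-- The terms `(lam j - lam m) * (c j - [j < m])` are nonpositive and sum to
`s - ∑ j ∈ range m, lam j`. -/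
theorem hasSum_mul_le_sum_range_of_antitone {lam c : ℕ → ℝ} {m : ℕ} {s : ℝ}
    (hlam : Antitone lam) (hc0 : ∀ j, 0 ≤ c j) (hc1 : ∀ j, c j ≤ 1) (hc : HasSum c m)
    (hs : HasSum (fun j => lam j * c j) s) : s ≤ ∑ j ∈ range m, lam j := by
  set d : ℕ → ℝ := fun j => if j < m then lam j - lam m else 0
  have hd : HasSum d (∑ j ∈ range m, (lam j - lam m)) := by
    rw [← sum_congr rfl fun j hj => if_pos (mem_range.1 hj)]
    exact hasSum_sum_of_ne_finset_zero fun j hj => if_neg (by simpa using hj)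
  have hsum : HasSum (fun j => (lam j - lam m) * c j - d j) (s - ∑ j ∈ range m, lam j) := by
    have h := (hs.sub (hc.mul_left (lam m))).sub hd
    rw [sum_sub_distrib, sum_const, card_range, nsmul_eq_mul, mul_comm (m : ℝ),
      sub_sub_sub_cancel_right] at h
    simpa only [sub_mul] using h
  have hterm_nonpos : ∀ j, (lam j - lam m) * c j - d j ≤ 0 := by
    intro j
    by_cases hj : j < m
    · have := hlam hj.le
      simp only [d, if_pos hj]
      nlinarith [hc1 j]
    · have := hlam (not_lt.1 hj)
      simp only [d, if_neg hj]
      nlinarith [hc0 j]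
  linarith [hasSum_le hterm_nonpos hsum hasSum_zero]

namespace HilbertBasis

variable {H E : Type*} [NormedAddCommGroup H] [InnerProductSpace ℝ H]
  [NormedAddCommGroup E] [InnerProductSpace ℝ E]

section

variable {ι : Type*}

theorem hasSum_inner_sq_s7 (b : HilbertBasis ι ℝ H) (x : H) :
    HasSum (fun i => ⟪b i, x⟫_ℝ ^ 2) (‖x‖ ^ 2) := by
  simpa only [sq, real_inner_comm x, real_inner_self_eq_norm_sq] using
    b.hasSum_inner_mul_inner x x

theorem hasSum_inner_sq_of_norm_eq_one (b : HilbertBasis ι ℝ H) {x : H} (hx : ‖x‖ = 1) :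
    HasSum (fun i => ⟪b i, x⟫_ℝ ^ 2) 1 := by
  simpa only [hx, one_pow] using b.hasSum_inner_sq_s7 x

variable (b : HilbertBasis ι ℝ H) (T : H →L[ℝ] E)

theorem hasSum_inner_smul_apply (x : H) : HasSum (fun i => ⟪b i, x⟫_ℝ • T (b i)) (T x) := by
  simpa only [map_smul, b.repr_apply_apply] using (b.hasSum_repr x).mapL T

variable [DecidableEq ι] {lam : ι → ℝ}

theorem norm_apply_sq (hT : ∀ i j, ⟪T (b i), T (b j)⟫_ℝ = if i = j then lam j else 0) (j : ι) :
    ‖T (b j)‖ ^ 2 = lam j := by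
  rw [← real_inner_self_eq_norm_sq, hT, if_pos rfl]

theorem inner_apply_apply (hT : ∀ i j, ⟪T (b i), T (b j)⟫_ℝ = if i = j then lam j else 0)
    (j : ι) (x : H) : ⟪T (b j), T x⟫_ℝ = lam j * ⟪b j, x⟫_ℝ := by
  have h := (b.hasSum_inner_smul_apply T x).mapL (innerSL ℝ (T (b j)))
  simp only [innerSL_apply_apply, inner_smul_right, hT, mul_ite, mul_zero] at h
  rw [h.unique (hasSum_single j fun i hi => if_neg (Ne.symm hi)), if_pos rfl, mul_comm]

theorem hasSum_mul_inner_sq (hT : ∀ i j, ⟪T (b i), T (b j)⟫_ℝ = if i = j then lam j else 0)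
    (x : H) : HasSum (fun j => lam j * ⟪b j, x⟫_ℝ ^ 2) (‖T x‖ ^ 2) := by
  have hterm : ∀ i, innerSL ℝ (T x) (⟪b i, x⟫_ℝ • T (b i)) = lam i * ⟪b i, x⟫_ℝ ^ 2 := by
    intro i
    rw [innerSL_apply_apply, inner_smul_right, real_inner_comm (T (b i)),
      b.inner_apply_apply T hT]
    ring
  simpa only [hterm, innerSL_apply_apply, real_inner_self_eq_norm_sq] using
    (b.hasSum_inner_smul_apply T x).mapL (innerSL ℝ (T x))

theorem hasSum_norm_apply_sq
    (hT : ∀ i j, ⟪T (b i), T (b j)⟫_ℝ = if i = j then lam j else 0) (hlam0 : ∀ j, 0 ≤ lam j)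
    (hlam : Summable lam) {κ : Type*} (w : HilbertBasis κ ℝ H) :
    HasSum (fun k => ‖T (w k)‖ ^ 2) (∑' j, lam j) := by
  set F : ι × κ → ℝ := fun p => lam p.1 * ⟪b p.1, w p.2⟫_ℝ ^ 2
  have hF0 : 0 ≤ F := fun p => mul_nonneg (hlam0 p.1) (sq_nonneg _)
  have hrow : ∀ j, HasSum (fun k => F (j, k)) (lam j) := fun j => by
    simpa only [F, mul_one, real_inner_comm (b j)] using
      (w.hasSum_inner_sq_of_norm_eq_one (b.orthonormal.1 j)).mul_left (lam j)
  have hcol : ∀ k, HasSum (fun j => F (j, k)) (‖T (w k)‖ ^ 2) :=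
    fun k => b.hasSum_mul_inner_sq T hT (w k)
  have hF : Summable F := (summable_prod_of_nonneg hF0).2
    ⟨fun j => (hrow j).summable, by simpa only [(hrow _).tsum_eq] using hlam⟩
  have htotal : ∑' p, F p = ∑' j, lam j := (hF.hasSum.prod_fiberwise hrow).tsum_eq.symm
  exact htotal ▸ ((Equiv.prodComm κ ι).hasSum_iff.2 hF.hasSum).prod_fiberwise hcol

end

section

variable (b : HilbertBasis ℕ ℝ H) (T : H →L[ℝ] E) {lam : ℕ → ℝ}

theorem sum_norm_apply_sq_le
    (hT : ∀ i j, ⟪T (b i), T (b j)⟫_ℝ = if i = j then lam j else 0) (hlam : Antitone lam)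
    {κ : Type*} {w : κ → H} (hw : Orthonormal ℝ w) (s : Finset κ) :
    ∑ k ∈ s, ‖T (w k)‖ ^ 2 ≤ ∑ j ∈ range #s, lam j := by
  set c : ℕ → ℝ := fun j => ∑ k ∈ s, ⟪b j, w k⟫_ℝ ^ 2
  have hc1 : ∀ j, c j ≤ 1 := fun j => by
    simpa only [Real.norm_eq_abs, sq_abs, real_inner_comm (b j), b.orthonormal.1 j, one_pow]
      using hw.sum_inner_products_le (s := s) (b j)
  have hc : HasSum c #s := by
    simpa using hasSum_sum fun k _ => b.hasSum_inner_sq_of_norm_eq_one (hw.1 k)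
  have hs : HasSum (fun j => lam j * c j) (∑ k ∈ s, ‖T (w k)‖ ^ 2) := by
    simpa only [c, mul_sum] using hasSum_sum fun k _ => b.hasSum_mul_inner_sq T hT (w k)
  exact hasSum_mul_le_sum_range_of_antitone hlam (fun j => sum_nonneg fun _ _ => sq_nonneg _)
    hc1 hc hs

end

end HilbertBasis

theorem stmt7_general {H : Type*} [NormedAddCommGroup H] [InnerProductSpace ℝ H] [CompleteSpace H]
    {Ω : Type*} [MeasurableSpace Ω] (μ : Measure Ω) (k : Ω → H)
    (ι : H →L[ℝ] Lp ℝ 2 μ)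
    (e : ℕ → H) (lam : ℕ → ℝ)
    (he : Orthonormal ℝ e)
    (hdense : (Submodule.span ℝ (Set.range e)).topologicalClosure = ⊤)
    (hpos : ∀ j, 0 < lam j) (hmono : ∀ j, lam (j + 1) ≤ lam j)
    (heig : ∀ i j, ⟪ι (e i), ι (e j)⟫_ℝ = if i = j then lam j else 0)
    (hsum : Summable lam)
    (w : ℕ → H) (hw : Orthonormal ℝ w)
    (hwdense : (Submodule.span ℝ (Set.range w)).topologicalClosure = ⊤)
    (n : ℕ) :
    (∑ k ∈ Finset.range n, ‖ι (w k)‖ ^ 2 ≤ ∑ j ∈ Finset.range n, lam j) ∧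
      (∑' k : ℕ, ‖ι (w k)‖ ^ 2 = ∑' j : ℕ, lam j) ∧
      (∑' j : ℕ, lam (n + j) ≤ ∑' k : ℕ, ‖ι (w (n + k))‖ ^ 2) ∧
      ((∀ j, w j = e j) → ∑' k : ℕ, ‖ι (w (n + k))‖ ^ 2 = ∑' j : ℕ, lam (n + j)) := by
  obtain ⟨b, rfl⟩ : ∃ b : HilbertBasis ℕ ℝ H, ⇑b = e := ⟨_, HilbertBasis.coe_mk he hdense.ge⟩
  obtain ⟨v, rfl⟩ : ∃ v : HilbertBasis ℕ ℝ H, ⇑v = w := ⟨_, HilbertBasis.coe_mk hw hwdense.ge⟩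
  have hpartial : ∀ m, ∑ k ∈ range m, ‖ι (v k)‖ ^ 2 ≤ ∑ j ∈ range m, lam j := fun m => by
    simpa using
      b.sum_norm_apply_sq_le ι heig (antitone_nat_of_succ_le hmono) v.orthonormal (range m)
  have htotal := b.hasSum_norm_apply_sq ι heig (fun j => (hpos j).le) hsum v
  refine ⟨hpartial n, htotal.tsum_eq,
    tsum_nat_add_le_of_sum_range_le htotal hsum.hasSum n (hpartial n), fun hvb => ?_⟩
  simp_rw [hvb, b.norm_apply_sq ι heig]

/-- Assume `Σ_j λ_j < ∞`. For every Hilbert orthonormal basis `(w_k)` of `H`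
(zero-indexed) and every `n`: `Σ_{k<n} ‖ι w_k‖² ≤ Σ_{j<n} λ_j`, `Σ_k ‖ι w_k‖² = Σ_j λ_j`,
hence `Σ_{k≥n} ‖ι w_k‖² ≥ Σ_{j≥n} λ_j`, with equality when `w_j = e_j` for all `j`. -/
theorem stmt7 {H : Type*} [NormedAddCommGroup H] [InnerProductSpace ℝ H] [CompleteSpace H]
    {Ω : Type*} [MeasurableSpace Ω] (μ : Measure Ω) (k : Ω → H)
    (ι : H →L[ℝ] Lp ℝ 2 μ)
    (hι : ∀ f : H, (ι f : Ω → ℝ) =ᵐ[μ] fun x => ⟪f, k x⟫_ℝ)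
    (hinj : Function.Injective ι)
    (e : ℕ → H) (lam : ℕ → ℝ)
    (he : Orthonormal ℝ e)
    (hdense : (Submodule.span ℝ (Set.range e)).topologicalClosure = ⊤)
    (hpos : ∀ j, 0 < lam j) (hmono : ∀ j, lam (j + 1) ≤ lam j)
    (heig : ∀ i j, ⟪ι (e i), ι (e j)⟫_ℝ = if i = j then lam j else 0)
    (hsum : Summable lam)
    (w : ℕ → H) (hw : Orthonormal ℝ w)
    (hwdense : (Submodule.span ℝ (Set.range w)).topologicalClosure = ⊤)
    (n : ℕ) :
    (∑ k ∈ Finset.range n, ‖ι (w k)‖ ^ 2 ≤ ∑ j ∈ Finset.range n, lam j) ∧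
      (∑' k : ℕ, ‖ι (w k)‖ ^ 2 = ∑' j : ℕ, lam j) ∧
      (∑' j : ℕ, lam (n + j) ≤ ∑' k : ℕ, ‖ι (w (n + k))‖ ^ 2) ∧
      ((∀ j, w j = e j) → ∑' k : ℕ, ‖ι (w (n + k))‖ ^ 2 = ∑' j : ℕ, lam (n + j)) :=
  stmt7_general μ k ι e lam he hdense hpos hmono heig hsum w hw hwdense n
end

section
/- Let U ⊆ V ⊆ H be closed subspaces with H-orthogonal projections P_U and P_V. Then for every x ∈ Ω: P_U(x)² = ‖P_V(k x) − P_U(k x)‖_H² + P_V(x)², where ‖P_V(k x) − P_U(k x)‖_H is the Power Function of U relative to the native space V (with kernel K_V(x,y) = ⟨P_V k x, P_V k y⟩_H). -/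
open scoped InnerProductSpace

theorem norm_sub_sq_eq_of_sub_mem_of_sub_mem_orthogonal {𝕜 E : Type*} [RCLike 𝕜]
    [NormedAddCommGroup E] [InnerProductSpace 𝕜 E] {K : Submodule 𝕜 E} {f g h : E}
    (hgh : g - h ∈ K) (hfg : f - g ∈ Kᗮ) :
    ‖f - h‖ ^ 2 = ‖g - h‖ ^ 2 + ‖f - g‖ ^ 2 := by
  have hsplit : f - h = (g - h) + (f - g) := by abel
  rw [hsplit, sq, sq, sq, norm_add_sq_eq_norm_sq_add_norm_sq_of_inner_eq_zero _ _
    (K.inner_right_of_mem_orthogonal hgh hfg)]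

theorem stmt11_general {H : Type*} [NormedAddCommGroup H] [InnerProductSpace ℝ H]
    {Ω : Type*} (k : Ω → H)
    (U V : Submodule ℝ H) (hUV : U ≤ V)
    (pU pV : H →ₗ[ℝ] H)
    (hpU : ∀ f : H, pU f ∈ U ∧ f - pU f ∈ Uᗮ)
    (hpV : ∀ f : H, pV f ∈ V ∧ f - pV f ∈ Vᗮ)
    (x : Ω) :
    ‖k x - pU (k x)‖ ^ 2 = ‖pV (k x) - pU (k x)‖ ^ 2 + ‖k x - pV (k x)‖ ^ 2 :=
  norm_sub_sq_eq_of_sub_mem_of_sub_mem_orthogonal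
    (V.sub_mem (hpV (k x)).1 (hUV (hpU (k x)).1)) (hpV (k x)).2

/-- For closed subspaces `U ⊆ V ⊆ H` with `H`-orthogonal projections
`pU` and `pV` (characterized by the usual orthogonality conditions), the Power Functions
are related, for every `x ∈ Ω`, by
`P_U(x)² = ‖pV (k x) − pU (k x)‖² + P_V(x)²`, where `‖pV (k x) − pU (k x)‖` is the Power
Function of `U` relative to the native space `V`. -/
theorem stmt11 {H : Type*} [NormedAddCommGroup H] [InnerProductSpace ℝ H] [CompleteSpace H]
    {Ω : Type*} (k : Ω → H)
    (U V : Submodule ℝ H) (hUV : U ≤ V)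
    (hUc : IsClosed (U : Set H)) (hVc : IsClosed (V : Set H))
    (pU pV : H →ₗ[ℝ] H)
    (hpU : ∀ f : H, pU f ∈ U ∧ f - pU f ∈ Uᗮ)
    (hpV : ∀ f : H, pV f ∈ V ∧ f - pV f ∈ Vᗮ)
    (x : Ω) :
    ‖k x - pU (k x)‖ ^ 2 = ‖pV (k x) - pU (k x)‖ ^ 2 + ‖k x - pV (k x)‖ ^ 2 :=
  stmt11_general k U V hUV pU pV hpU hpV x
end
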